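/- arXiv:2408.05256 — 2 statements merged into one kernel-verified Lean document; each statement's English description precedes it below -/
import Mathlib

section
/- Lemma 3 (first part): Suppose ∑_j α_j = 1, ∑_j p_j > m, and {j : α_j m / p_j > 1} is nonempty. If x* is the optimal solution of the log-linear knapsack problem, then x*_j = 1 for every j ∈ argmax_k α_k/p_k. -/
open Finset

set_option maxHeartbeats 1000000

noncomputable def llObj {L : ℕ} (α : Fin L → ℝ) (x : Fin L → ℝ) : EReal :=
  if ∀ j, 0 < x j then ((∑ j, α j * Real.log (x j) : ℝ) : EReal) else ⊥

def Feasible {L : ℕ} (p : Fin L → ℝ) (m : ℝ) (x : Fin L → ℝ) : Prop :=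
  (∑ j, p j * x j) ≤ m ∧ ∀ j, 0 ≤ x j ∧ x j ≤ 1

lemma sum_update_lin {L : ℕ} (c x : Fin L → ℝ) (j : Fin L) (a : ℝ) :
    ∑ i, c i * Function.update x j a i
      = c j * a - c j * x j + ∑ i, c i * x i := by
  have h1 : ∀ i ∈ Finset.univ.erase j,
      c i * Function.update x j a i = c i * x i := by
    intro i hi
    rw [Function.update_of_ne (Finset.ne_of_mem_erase hi)]
  rw [← Finset.add_sum_erase _ (fun i => c i * Function.update x j a i)
        (Finset.mem_univ j),
      ← Finset.add_sum_erase _ (fun i => c i * x i) (Finset.mem_univ j),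
      Finset.sum_congr rfl h1, Function.update_self]
  ring

lemma sum_update_aux {L : ℕ} (c x : Fin L → ℝ) (g : ℝ → ℝ) (j : Fin L) (a : ℝ) :
    ∑ i, c i * g (Function.update x j a i)
      = c j * g a - c j * g (x j) + ∑ i, c i * g (x i) := by
  have h1 : ∀ i ∈ Finset.univ.erase j,
      c i * g (Function.update x j a i) = c i * g (x i) := by
    intro i hi
    rw [Function.update_of_ne (Finset.ne_of_mem_erase hi)]
  rw [← Finset.add_sum_erase _ (fun i => c i * g (Function.update x j a i))
        (Finset.mem_univ j),
      ← Finset.add_sum_erase _ (fun i => c i * g (x i)) (Finset.mem_univ j),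
      Finset.sum_congr rfl h1, Function.update_self]
  ring

/-- log b - log a ≥ (b - a)/b for 0 < a, 0 < b -/
lemma log_diff_ge (a b : ℝ) (ha : 0 < a) (hb : 0 < b) :
    (b - a) / b ≤ Real.log b - Real.log a := by
  have h := Real.log_le_sub_one_of_pos (x := a / b) (div_pos ha hb)
  rw [Real.log_div (ne_of_gt ha) (ne_of_gt hb)] at h
  have hb' : b ≠ 0 := ne_of_gt hb
  have : a / b - 1 = -((b - a) / b) := by field_simp; ring
  linarith [h, this ▸ h]

lemma log_diff_le (a b : ℝ) (ha : 0 < a) (hb : 0 < b) :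
    Real.log a - Real.log b ≤ (a - b) / b := by
  have h := Real.log_le_sub_one_of_pos (x := a / b) (div_pos ha hb)
  rw [Real.log_div (ne_of_gt ha) (ne_of_gt hb)] at h
  have h2 : a / b - 1 = (a - b) / b := by field_simp
  linarith [h2 ▸ h]

theorem lemma_three_first_part {L : ℕ} (hL : 0 < L)
    (α p : Fin L → ℝ) (m : ℝ)
    (hα : ∀ j, 0 < α j) (hp : ∀ j, 0 < p j) (hm : 0 < m)
    (hsum : (∑ j, α j) = 1)
    (hbudget : m < ∑ j, p j)
    (hex : ∃ j, 1 < α j * m / p j)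
    (xstar : Fin L → ℝ)
    (hfeas : Feasible p m xstar)
    (hopt : ∀ y, Feasible p m y → llObj α y ≤ llObj α xstar) :
    ∀ j, (∀ k, α k / p k ≤ α j / p j) → xstar j = 1 := by
  intro j hj
  obtain ⟨hbud, hbox⟩ := hfeas
  have hne : (Finset.univ : Finset (Fin L)).Nonempty := ⟨j, Finset.mem_univ j⟩
  have hpsum : 0 < ∑ i, p i := Finset.sum_pos (fun i _ => hp i) hne
  -- an interior feasible point
  have hy0pos : ∀ i : Fin L, (0:ℝ) < m / ∑ i, p i := fun _ => div_pos hm hpsum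
  have hy0 : Feasible p m (fun _ => m / ∑ i, p i) := by
    refine ⟨?_, fun i => ⟨le_of_lt (hy0pos i), ?_⟩⟩
    · rw [← Finset.sum_mul, mul_div_cancel₀ _ (ne_of_gt hpsum)]
    · exact le_of_lt ((div_lt_one hpsum).mpr hbudget)
  -- xstar has positive coordinates
  have hxpos : ∀ i, 0 < xstar i := by
    by_contra hcon
    have h1 := hopt _ hy0
    unfold llObj at h1
    rw [if_pos hy0pos, if_neg hcon] at h1
    exact absurd (le_bot_iff.mp h1) (EReal.coe_ne_bot _)
  -- key: no strictly better feasible positive point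
  have key : ∀ y, Feasible p m y → (∀ i, 0 < y i) →
      ¬ (∑ i, α i * Real.log (xstar i) < ∑ i, α i * Real.log (y i)) := by
    intro y hfy hypos hlt
    have h1 := hopt y hfy
    unfold llObj at h1
    rw [if_pos hypos, if_pos hxpos] at h1
    exact absurd (EReal.coe_le_coe_iff.mp h1) (not_le.mpr hlt)
  by_contra h
  have hxj1 : xstar j < 1 := lt_of_le_of_ne (hbox j).2 h
  rcases lt_or_eq_of_le hbud with hs | hs
  · -- slack budget: increase x_j
    set s := ∑ i, p i * xstar i with hs_def
    set ε := min ((m - s) / p j) (1 - xstar j) with hε_def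
    have hε : 0 < ε :=
      lt_min (div_pos (by linarith) (hp j)) (by linarith)
    have hε1 : ε ≤ (m - s) / p j := min_le_left _ _
    have hε2 : ε ≤ 1 - xstar j := min_le_right _ _
    set y := Function.update xstar j (xstar j + ε) with hy_def
    have hyfeas : Feasible p m y := by
      refine ⟨?_, ?_⟩
      · rw [hy_def, sum_update_lin p xstar j]
        have hεp : ε * p j ≤ m - s := (le_div_iff₀ (hp j)).mp hε1
        nlinarith [hεp]
      · intro i
        rcases eq_or_ne i j with rfl | hij
        · rw [hy_def, Function.update_self]
          constructor <;> [linarith [hxpos i, hε]; linarith]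
        · rw [hy_def, Function.update_of_ne hij]
          exact hbox i
    have hypos : ∀ i, 0 < y i := by
      intro i
      rcases eq_or_ne i j with rfl | hij
      · rw [hy_def, Function.update_self]; linarith [hxpos i]
      · rw [hy_def, Function.update_of_ne hij]; exact hxpos i
    refine key y hyfeas hypos ?_
    rw [hy_def, sum_update_aux α xstar Real.log j]

    have hlog : Real.log (xstar j) < Real.log (xstar j + ε) :=
      Real.log_lt_log (hxpos j) (by linarith)
    nlinarith [hα j]
  · -- tight budget: exchange argument
    -- find k with α k * (p j * xstar j) < α j * (p k * xstar k)
    have hex2 : ∃ k, α k * (p j * xstar j) < α j * (p k * xstar k) := by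
      by_contra hcon
      push_neg at hcon
      have hsum2 : α j * m ≤ p j * xstar j := by
        calc α j * m = ∑ k, α j * (p k * xstar k) := by
              rw [← Finset.mul_sum, hs]
          _ ≤ ∑ k, α k * (p j * xstar j) := Finset.sum_le_sum (fun k _ => hcon k)
          _ = p j * xstar j := by rw [← Finset.sum_mul, hsum, one_mul]
      obtain ⟨j0, hj0⟩ := hex
      have hj0' : p j0 < α j0 * m := by
        have := (lt_div_iff₀ (hp j0)).mp hj0; linarith
      have hjj0 : α j0 * p j ≤ α j * p j0 :=
        (div_le_div_iff₀ (hp j0) (hp j)).mp (hj j0)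
      have h1 : α j0 * p j * m ≤ α j * p j0 * m :=
        mul_le_mul_of_nonneg_right hjj0 hm.le
      have h2 : p j0 * p j < α j0 * m * p j := mul_lt_mul_of_pos_right hj0' (hp j)
      have h3 : p j0 * (α j * m) ≤ p j0 * (p j * xstar j) :=
        mul_le_mul_of_nonneg_left hsum2 (hp j0).le
      have h4 : p j0 * (p j * xstar j) ≤ p j0 * p j := by
        nlinarith [mul_le_mul_of_nonneg_left (hbox j).2 (mul_pos (hp j0) (hp j)).le]
      nlinarith [h1, h2, h3, h4]
    obtain ⟨k, hk⟩ := hex2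
    have hkj : k ≠ j := by
      intro hkj; subst hkj; exact absurd hk (lt_irrefl _)
    have hαj := hα j; have hαk := hα k
    have hxkpos := hxpos k; have hxjpos := hxpos j
    have hpk := hp k; have hpj := hp j
    set D := (α j * (p k * xstar k) - α k * (p j * xstar j)) / (α j + α k) with hD_def
    have hD : 0 < D := div_pos (by linarith) (by linarith)
    set ε := min (min (p j * (1 - xstar j)) (p k * xstar k / 2)) (D / 2) with hε_def
    have hε : 0 < ε :=
      lt_min (lt_min (mul_pos hpj (by linarith))
        (div_pos (mul_pos hpk hxkpos) two_pos)) (half_pos hD)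
    have hε1 : ε ≤ p j * (1 - xstar j) := le_trans (min_le_left _ _) (min_le_left _ _)
    have hε2 : ε < p k * xstar k :=
      lt_of_le_of_lt (le_trans (min_le_left _ _) (min_le_right _ _))
        (by linarith [mul_pos hpk hxkpos])
    have hε3 : ε < D := lt_of_le_of_lt (min_le_right _ _) (by linarith)
    have hnum : ε * (α j + α k) < α j * (p k * xstar k) - α k * (p j * xstar j) :=
      (lt_div_iff₀ (by linarith : (0:ℝ) < α j + α k)).mp hε3
    set a := xstar j + ε / p j with ha_def
    set b := xstar k - ε / p k with hb_def
    have hapos : 0 < a := by have := div_pos hε hpj; simp only [ha_def]; linarith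
    have hbpos : 0 < b := by
      have : ε / p k < xstar k := (div_lt_iff₀ hpk).mpr (by linarith [hε2])
      simp only [hb_def]; linarith
    have ha1 : a ≤ 1 := by
      have : ε / p j ≤ 1 - xstar j := (div_le_iff₀ hpj).mpr (by linarith [hε1])
      simp only [ha_def]; linarith
    set z := Function.update xstar j a with hz_def
    set y := Function.update z k b with hy_def
    have hzk : z k = xstar k := Function.update_of_ne hkj _ _
    have hyi : ∀ i, i ≠ k → i ≠ j → y i = xstar i := by
      intro i hik hij
      rw [hy_def, Function.update_of_ne hik, hz_def, Function.update_of_ne hij]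
    have hyj : y j = a := by
      rw [hy_def, Function.update_of_ne (Ne.symm hkj), hz_def, Function.update_self]
    have hyk : y k = b := by rw [hy_def, Function.update_self]
    have hypos : ∀ i, 0 < y i := by
      intro i
      rcases eq_or_ne i k with rfl | hik
      · rw [hyk]; exact hbpos
      rcases eq_or_ne i j with rfl | hij
      · rw [hyj]; exact hapos
      · rw [hyi i hik hij]; exact hxpos i
    have hbudy : ∑ i, p i * y i = m := by
      rw [hy_def, sum_update_lin p z k]
      rw [hz_def, sum_update_lin p xstar j]
      rw [show (Function.update xstar j a) k = xstar k from Function.update_of_ne hkj _ _]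
      rw [← hs, ha_def, hb_def]
      field_simp
      try ring
    have hyfeas : Feasible p m y := by
      refine ⟨le_of_eq hbudy, fun i => ⟨le_of_lt (hypos i), ?_⟩⟩
      rcases eq_or_ne i k with rfl | hik
      · rw [hyk]; simp only [hb_def]
        have := div_pos hε hpk
        linarith [(hbox i).2]
      rcases eq_or_ne i j with rfl | hij
      · rw [hyj]; exact ha1
      · rw [hyi i hik hij]; exact (hbox i).2
    refine key y hyfeas hypos ?_
    have hsumy : ∑ i, α i * Real.log (y i)
        = α k * Real.log b - α k * Real.log (xstar k)
          + (α j * Real.log a - α j * Real.log (xstar j))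
          + ∑ i, α i * Real.log (xstar i) := by
      rw [hy_def, sum_update_aux α z Real.log k, hz_def,
        sum_update_aux α xstar Real.log j,
        show (Function.update xstar j a) k = xstar k from Function.update_of_ne hkj _ _]
      ring
    rw [hsumy]
    have hA : (a - xstar j) / a ≤ Real.log a - Real.log (xstar j) :=
      log_diff_ge _ _ hxjpos hapos
    have hB : Real.log (xstar k) - Real.log b ≤ (xstar k - b) / b :=
      log_diff_le _ _ hxkpos hbpos
    have haval : a - xstar j = ε / p j := by simp [ha_def]
    have hbval : xstar k - b = ε / p k := by simp [hb_def]
    have hfrac : α k * ((xstar k - b) / b) < α j * ((a - xstar j) / a) := by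
      rw [haval, hbval]
      have ha' : (ε / p j) / a = ε / (p j * xstar j + ε) := by
        rw [ha_def, div_div, mul_add, mul_comm (p j) (ε / p j),
          div_mul_cancel₀ _ (ne_of_gt hpj)]
      have hb' : (ε / p k) / b = ε / (p k * xstar k - ε) := by
        rw [hb_def, div_div, mul_sub, mul_comm (p k) (ε / p k),
          div_mul_cancel₀ _ (ne_of_gt hpk)]
      rw [ha', hb',
        show α k * (ε / (p k * xstar k - ε)) = α k * ε / (p k * xstar k - ε) from
          (mul_div_assoc _ _ _).symm,
        show α j * (ε / (p j * xstar j + ε)) = α j * ε / (p j * xstar j + ε) from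
          (mul_div_assoc _ _ _).symm]
      have hd1 : 0 < p j * xstar j + ε := by positivity
      have hd2 : 0 < p k * xstar k - ε := by linarith
      rw [div_lt_div_iff₀ hd2 hd1]
      nlinarith [mul_lt_mul_of_pos_left hnum hε]
    have h5 := mul_le_mul_of_nonneg_left hA hαj.le
    have h6 := mul_le_mul_of_nonneg_left hB hαk.le
    linarith [hfrac, h5, h6]
end

section
/- Recursion step correctness: let ∑_j α_j = 1, ∑_j p_j > m, S = argmax_k α_k/p_k a nonempty proper subset of {1,...,L}, and suppose {j : α_j m/p_j > 1} ≠ ∅. Let x* be the optimal solution of the LLKP. Then the restriction of x* to J¹ = {1,...,L} \ S is the optimal solution of the reduced problem: maximize ∑_{j∈J¹} α_j ln x_j subject to ∑_{j∈J¹} p_j x_j = m − ∑_{j∈S} p_j and 0 ≤ x_j ≤ 1 for j ∈ J¹. -/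
open Finset

/-- Objective of the reduced problem on an index set `J`, with value `⊥` when some
coordinate in `J` is not strictly positive. -/
noncomputable def llObjOn {L : ℕ} (J : Finset (Fin L)) (α : Fin L → ℝ)
    (x : Fin L → ℝ) : EReal :=
  if ∀ j ∈ J, 0 < x j then ((∑ j ∈ J, α j * Real.log (x j) : ℝ) : EReal) else ⊥

private lemma log_sub_log_ge {u v : ℝ} (hv : 0 < v) (hu : 0 < u) :
    (u - v) / u ≤ Real.log u - Real.log v := by
  have h := Real.log_le_sub_one_of_pos (show (0:ℝ) < v / u from div_pos hv hu)
  rw [Real.log_div hv.ne' hu.ne'] at h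
  have h2 : (u - v) / u = 1 - v / u := by field_simp
  linarith

private lemma log_sub_log_le {u v : ℝ} (hv : 0 < v) (hu : 0 < u) :
    Real.log u - Real.log v ≤ (u - v) / v := by
  have h := Real.log_le_sub_one_of_pos (show (0:ℝ) < u / v from div_pos hu hv)
  rw [Real.log_div hu.ne' hv.ne'] at h
  have h2 : (u - v) / v = u / v - 1 := by field_simp
  linarith

/-- Exchange lemma: moving a little budget from coordinate `k` to coordinate `j`
strictly improves the objective when the marginal ratio at `j` exceeds that at `k`. -/
private lemma exchange {L : ℕ} (α p : Fin L → ℝ) (m : ℝ)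
    (hα : ∀ j, 0 < α j) (hp : ∀ j, 0 < p j)
    (x : Fin L → ℝ) (hfeas : Feasible p m x) (hpos : ∀ i, 0 < x i)
    {j k : Fin L} (hjk : j ≠ k) (hxj : x j < 1)
    (hratio : α k / (p k * x k) < α j / (p j * x j)) :
    ∃ y, Feasible p m y ∧ llObj α x < llObj α y := by
  set a := p j * x j with ha_def
  set b := p k * x k with hb_def
  have ha : 0 < a := mul_pos (hp j) (hpos j)
  have hb : 0 < b := mul_pos (hp k) (hpos k)
  have hD : 0 < α j * b - α k * a := by
    have := (div_lt_div_iff₀ hb ha).mp hratio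
    linarith
  set D := α j * b - α k * a with hD_def
  have hαjk : 0 < α j + α k := by have := hα j; have := hα k; linarith
  set t := min (min (p j * (1 - x j)) (b / 2)) (D / (2 * (α j + α k))) with ht_def
  have ht0 : 0 < t := by
    apply lt_min (lt_min _ _) _
    · exact mul_pos (hp j) (by linarith)
    · linarith
    · positivity
  have ht1 : t ≤ p j * (1 - x j) := le_trans (min_le_left _ _) (min_le_left _ _)
  have ht2 : t < b := lt_of_le_of_lt (le_trans (min_le_left _ _) (min_le_right _ _)) (by linarith)
  have ht3 : t * (α j + α k) < D := by
    have h : t ≤ D / (2 * (α j + α k)) := min_le_right _ _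
    have h2 : t * (2 * (α j + α k)) ≤ D := (le_div_iff₀ (by positivity)).mp h
    nlinarith
  set y : Fin L → ℝ := fun i => if i = j then x j + t / p j else if i = k then x k - t / p k else x i
    with hy_def
  have hyj : y j = x j + t / p j := by simp [hy_def]
  have hyk : y k = x k - t / p k := by simp [hy_def, hjk.symm]
  have hyo : ∀ i, i ≠ j → i ≠ k → y i = x i := by
    intro i h1 h2; simp [hy_def, h1, h2]
  have hyjpos : 0 < y j := by
    rw [hyj]; have : 0 < t / p j := div_pos ht0 (hp j); linarith [hpos j]
  have hykpos : 0 < y k := by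
    rw [hyk]; have : t / p k < x k := (div_lt_iff₀ (hp k)).mpr (by rw [mul_comm]; exact ht2)
    linarith
  have hypos : ∀ i, 0 < y i := by
    intro i
    by_cases h1 : i = j
    · rw [h1]; exact hyjpos
    by_cases h2 : i = k
    · rw [h2]; exact hykpos
    · rw [hyo i h1 h2]; exact hpos i
  have hyj1 : y j ≤ 1 := by
    rw [hyj]
    have : t / p j ≤ 1 - x j := (div_le_iff₀ (hp j)).mpr (by rw [mul_comm]; exact ht1)
    linarith
  have hsumy : (∑ i, p i * y i) = ∑ i, p i * x i := by
    have key : (∑ i, (p i * y i - p i * x i)) = (p j * y j - p j * x j) + (p k * y k - p k * x k) := by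
      apply Fintype.sum_eq_add j k hjk
      intro c ⟨hc1, hc2⟩
      rw [hyo c hc1 hc2]; ring
    have h1 : p j * y j - p j * x j = t := by
      rw [hyj]; field_simp [(hp j).ne']; ring
    have h2 : p k * y k - p k * x k = -t := by
      rw [hyk]; field_simp [(hp k).ne']; ring
    have := Finset.sum_sub_distrib (s := (univ : Finset (Fin L)))
      (f := fun i => p i * y i) (g := fun i => p i * x i)
    rw [this, h1, h2] at key
    linarith
  have hyfeas : Feasible p m y := by
    constructor
    · rw [hsumy]; exact hfeas.1
    · intro i
      by_cases h1 : i = j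
      · rw [h1]; exact ⟨le_of_lt hyjpos, hyj1⟩
      by_cases h2 : i = k
      · rw [h2]
        refine ⟨le_of_lt hykpos, ?_⟩
        rw [hyk]
        have : 0 < t / p k := div_pos ht0 (hp k)
        linarith [(hfeas.2 k).2]
      · rw [hyo i h1 h2]; exact hfeas.2 i
  refine ⟨y, hyfeas, ?_⟩
  rw [llObj, llObj, if_pos hpos, if_pos hypos, EReal.coe_lt_coe_iff]
  have key : (∑ i, (α i * Real.log (y i) - α i * Real.log (x i)))
      = (α j * Real.log (y j) - α j * Real.log (x j))
        + (α k * Real.log (y k) - α k * Real.log (x k)) := by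
    apply Fintype.sum_eq_add j k hjk
    intro c ⟨hc1, hc2⟩
    rw [hyo c hc1 hc2]; ring
  have hgj : t / (a + t) ≤ Real.log (y j) - Real.log (x j) := by
    have h := log_sub_log_ge (hpos j) hyjpos
    have he : (y j - x j) / y j = t / (a + t) := by
      have hd1 : (0:ℝ) < x j + t / p j := by rw [← hyj]; exact hyjpos
      have hd2 : (0:ℝ) < a + t := by linarith
      rw [hyj, div_eq_div_iff hd1.ne' hd2.ne', ha_def]
      field_simp [(hp j).ne']
      ring
    rwa [he] at h
  have hgk : -(t / (b - t)) ≤ Real.log (y k) - Real.log (x k) := by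
    have h := log_sub_log_le hykpos (hpos k)
    have he : (x k - y k) / y k = t / (b - t) := by
      have e1 : x k - y k = t / p k := by rw [hyk]; ring
      have e2 : y k = (b - t) / p k := by
        rw [hyk, hb_def]; field_simp [(hp k).ne']
      rw [e1, e2, div_div_div_cancel_right₀ (hp k).ne']
    have : Real.log (x k) - Real.log (y k) ≤ t / (b - t) := by rwa [he] at h
    linarith
  have hcore : 0 < α j * (t / (a + t)) - α k * (t / (b - t)) := by
    have h1 : α k / (b - t) < α j / (a + t) := by
      rw [div_lt_div_iff₀ (by linarith) (by linarith)]
      nlinarith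
    have h2 : 0 < t * (α j / (a + t) - α k / (b - t)) :=
      mul_pos ht0 (by linarith)
    calc (0:ℝ) < t * (α j / (a + t) - α k / (b - t)) := h2
      _ = α j * (t / (a + t)) - α k * (t / (b - t)) := by ring
  have hgain : 0 < (α j * Real.log (y j) - α j * Real.log (x j))
      + (α k * Real.log (y k) - α k * Real.log (x k)) := by
    have e1 : α j * Real.log (y j) - α j * Real.log (x j)
        = α j * (Real.log (y j) - Real.log (x j)) := by ring
    have e2 : α k * Real.log (y k) - α k * Real.log (x k)
        = α k * (Real.log (y k) - Real.log (x k)) := by ring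
    rw [e1, e2]
    have b1 : α j * (t / (a + t)) ≤ α j * (Real.log (y j) - Real.log (x j)) :=
      mul_le_mul_of_nonneg_left hgj (le_of_lt (hα j))
    have b2 : α k * (-(t / (b - t))) ≤ α k * (Real.log (y k) - Real.log (x k)) :=
      mul_le_mul_of_nonneg_left hgk (le_of_lt (hα k))
    nlinarith
  have := Finset.sum_sub_distrib (s := (univ : Finset (Fin L)))
    (f := fun i => α i * Real.log (y i)) (g := fun i => α i * Real.log (x i))
  rw [this] at key
  linarith

theorem recursion_step_correctness {L : ℕ} (hL : 2 ≤ L)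
    (α p : Fin L → ℝ) (m : ℝ)
    (hα : ∀ j, 0 < α j) (hp : ∀ j, 0 < p j) (hm : 0 < m)
    (hsum : (∑ j, α j) = 1)
    (hbudget : m < ∑ j, p j)
    (hex : ∃ j, 1 < α j * m / p j)
    (S : Finset (Fin L))
    (hS : S = Finset.univ.filter (fun j => ∀ k, α k / p k ≤ α j / p j))
    (hSne : S.Nonempty) (hSproper : S ≠ Finset.univ)
    (xstar : Fin L → ℝ)
    (hfeas : Feasible p m xstar)
    (hopt : ∀ y, Feasible p m y → llObj α y ≤ llObj α xstar) :
    (∑ j ∈ Sᶜ, p j * xstar j) = m - (∑ j ∈ S, p j) ∧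
      (∀ j ∈ Sᶜ, 0 ≤ xstar j ∧ xstar j ≤ 1) ∧
      ∀ y : Fin L → ℝ,
        (∑ j ∈ Sᶜ, p j * y j) = m - (∑ j ∈ S, p j) →
        (∀ j ∈ Sᶜ, 0 ≤ y j ∧ y j ≤ 1) →
        llObjOn Sᶜ α y ≤ llObjOn Sᶜ α xstar := by
  have hpsum : (0:ℝ) < ∑ j, p j := lt_trans hm hbudget
  -- Step 1: xstar is strictly positive
  have hpos : ∀ i, 0 < xstar i := by
    by_contra h
    have hbot : llObj α xstar = ⊥ := by rw [llObj, if_neg]; exact h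
    set z : Fin L → ℝ := fun _ => m / ∑ j, p j with hz_def
    have hzpos : ∀ i, 0 < z i := fun i => div_pos hm hpsum
    have hzfeas : Feasible p m z := by
      constructor
      · have : (∑ i, p i * z i) = m := by
          simp only [hz_def]
          rw [← Finset.sum_mul]
          field_simp
        rw [this]
      · intro i
        refine ⟨le_of_lt (hzpos i), ?_⟩
        simp only [hz_def]
        rw [div_le_one hpsum]; exact le_of_lt hbudget
    have := hopt z hzfeas
    rw [hbot, llObj, if_pos hzpos] at this
    exact absurd this (by simp)
  -- Notation for membership in S
  have hmemS : ∀ j, j ∈ S ↔ ∀ k, α k / p k ≤ α j / p j := by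
    intro j; rw [hS, Finset.mem_filter]; simp
  -- Step 2: budget binds
  have hbind : (∑ i, p i * xstar i) = m := by
    by_contra hne
    have hlt : (∑ i, p i * xstar i) < m := lt_of_le_of_ne hfeas.1 hne
    -- some coordinate is < 1
    have hexlt : ∃ j, xstar j < 1 := by
      by_contra h
      push_neg at h
      have : ∀ j, xstar j = 1 := fun j => le_antisymm (hfeas.2 j).2 (h j)
      have : (∑ i, p i * xstar i) = ∑ i, p i := by
        apply Finset.sum_congr rfl; intro i _; rw [this i, mul_one]
      linarith
    obtain ⟨j, hj1⟩ := hexlt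
    set δ := m - ∑ i, p i * xstar i with hδ_def
    have hδ : 0 < δ := by linarith
    set y : Fin L → ℝ := fun i => if i = j then min 1 (xstar j + δ / p j) else xstar i with hy_def
    have hyj : y j = min 1 (xstar j + δ / p j) := by simp [hy_def]
    have hyo : ∀ i, i ≠ j → y i = xstar i := by intro i h; simp [hy_def, h]
    have hyjgt : xstar j < y j := by
      rw [hyj]
      apply lt_min hj1
      have : 0 < δ / p j := div_pos hδ (hp j)
      linarith
    have hypos : ∀ i, 0 < y i := by
      intro i; by_cases h : i = j
      · rw [h]; exact lt_trans (hpos j) hyjgt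
      · rw [hyo i h]; exact hpos i
    have hyfeas : Feasible p m y := by
      constructor
      · have key : (∑ i, (p i * y i - p i * xstar i)) = p j * y j - p j * xstar j := by
          apply Fintype.sum_eq_single j
          intro c hc; rw [hyo c hc]; ring
        have hb : p j * y j - p j * xstar j ≤ δ := by
          have : y j ≤ xstar j + δ / p j := by rw [hyj]; exact min_le_right _ _
          have h2 : p j * y j ≤ p j * (xstar j + δ / p j) :=
            mul_le_mul_of_nonneg_left this (le_of_lt (hp j))
          have h3 : p j * (xstar j + δ / p j) = p j * xstar j + δ := by
            rw [mul_add, mul_div_cancel₀ _ (hp j).ne']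
          linarith
        have := Finset.sum_sub_distrib (s := (univ : Finset (Fin L)))
          (f := fun i => p i * y i) (g := fun i => p i * xstar i)
        rw [this] at key
        linarith
      · intro i; by_cases h : i = j
        · rw [h]
          exact ⟨le_of_lt (hypos j), by rw [hyj]; exact min_le_left _ _⟩
        · rw [hyo i h]; exact hfeas.2 i
    have hlt2 : llObj α xstar < llObj α y := by
      rw [llObj, llObj, if_pos hpos, if_pos hypos, EReal.coe_lt_coe_iff]
      have key : (∑ i, (α i * Real.log (y i) - α i * Real.log (xstar i)))
          = α j * Real.log (y j) - α j * Real.log (xstar j) := by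
        apply Fintype.sum_eq_single j
        intro c hc; rw [hyo c hc]; ring
      have hlog : Real.log (xstar j) < Real.log (y j) :=
        Real.log_lt_log (hpos j) hyjgt
      have : 0 < α j * Real.log (y j) - α j * Real.log (xstar j) := by
        have := hα j; nlinarith
      have hsub := Finset.sum_sub_distrib (s := (univ : Finset (Fin L)))
        (f := fun i => α i * Real.log (y i)) (g := fun i => α i * Real.log (xstar i))
      rw [hsub] at key
      linarith
    exact absurd (hopt y hyfeas) (not_le.mpr hlt2)
  -- Step 3: xstar = 1 on S
  have honeS : ∀ j ∈ S, xstar j = 1 := by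
    intro j hjS
    by_contra hne
    have hj1 : xstar j < 1 := lt_of_le_of_ne (hfeas.2 j).2 hne
    have hjmax : ∀ k, α k / p k ≤ α j / p j := (hmemS j).mp hjS
    -- Case A: some k has strictly smaller ratio α/(p·x)
    by_cases hA : ∃ k, α k / (p k * xstar k) < α j / (p j * xstar j)
    · obtain ⟨k, hk⟩ := hA
      have hjk : j ≠ k := by rintro rfl; exact lt_irrefl _ hk
      obtain ⟨y, hyfeas, hylt⟩ := exchange α p m hα hp xstar hfeas hpos hjk hj1 hk
      exact absurd (hopt y hyfeas) (not_le.mpr hylt)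
    push_neg at hA
    -- all ratios ≥ ratio at j; first, all coordinates are < 1
    have hratioj : α j / p j < α j / (p j * xstar j) := by
      apply div_lt_div_of_pos_left (hα j) (mul_pos (hp j) (hpos j))
      nlinarith [hp j, hpos j]
    have hall1 : ∀ k, xstar k < 1 := by
      intro k
      rcases lt_or_eq_of_le (hfeas.2 k).2 with h | h
      · exact h
      · exfalso
        have h1 : α k / (p k * xstar k) = α k / p k := by rw [h, mul_one]
        have := hA k
        rw [h1] at this
        have := hjmax k
        linarith
    -- all ratios are equal (else exchange towards the larger one)
    have halleq : ∀ k, α k / (p k * xstar k) = α j / (p j * xstar j) := by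
      intro k
      by_contra hne2
      have hklt : α j / (p j * xstar j) < α k / (p k * xstar k) :=
        lt_of_le_of_ne (hA k) (Ne.symm hne2)
      have hjk : k ≠ j := by rintro rfl; exact lt_irrefl _ hklt
      obtain ⟨y, hyfeas, hylt⟩ := exchange α p m hα hp xstar hfeas hpos hjk (hall1 k) hklt
      exact absurd (hopt y hyfeas) (not_le.mpr hylt)
    -- then p k * xstar k = α k * m for all k, contradicting hex via j ∈ S
    set c := α j / (p j * xstar j) with hc_def
    have hc : 0 < c := div_pos (hα j) (mul_pos (hp j) (hpos j))
    have hval : ∀ k, p k * xstar k = α k / c := by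
      intro k
      have h := halleq k
      have h2 := (div_eq_iff (mul_pos (hp k) (hpos k)).ne').mp h
      rw [eq_div_iff hc.ne']
      linarith
    have hmsum : m = 1 / c := by
      rw [← hbind]
      have : (∑ i, p i * xstar i) = ∑ i, α i / c := by
        apply Finset.sum_congr rfl; intro i _; exact hval i
      rw [this, ← Finset.sum_div, hsum]
    have hxj : xstar j = α j * m / p j := by
      have h := hval j
      rw [hmsum, eq_div_iff (hp j).ne', mul_one_div, ← h]
      ring
    obtain ⟨l, hl⟩ := hex
    have : α l * m / p l ≤ α j * m / p j := by
      have h := hjmax l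
      have : α l / p l * m ≤ α j / p j * m := mul_le_mul_of_nonneg_right h (le_of_lt hm)
      calc α l * m / p l = α l / p l * m := by ring
        _ ≤ α j / p j * m := this
        _ = α j * m / p j := by ring
    rw [← hxj] at this
    linarith
  -- Assemble the three goals
  have hsplit : (∑ j ∈ S, p j * xstar j) + (∑ j ∈ Sᶜ, p j * xstar j) = m := by
    rw [Finset.sum_add_sum_compl]; exact hbind
  have hSone : (∑ j ∈ S, p j * xstar j) = ∑ j ∈ S, p j := by
    apply Finset.sum_congr rfl
    intro i hi; rw [honeS i hi, mul_one]
  have goal1 : (∑ j ∈ Sᶜ, p j * xstar j) = m - (∑ j ∈ S, p j) := by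
    rw [hSone] at hsplit; linarith
  refine ⟨goal1, fun j _ => hfeas.2 j, ?_⟩
  intro y hysum hybd
  by_cases hypos : ∀ j ∈ Sᶜ, 0 < y j
  swap
  · rw [llObjOn, if_neg hypos]; exact bot_le
  -- extend y by 1 on S
  set z : Fin L → ℝ := fun i => if i ∈ S then 1 else y i with hz_def
  have hzS : ∀ i ∈ S, z i = 1 := by intro i hi; simp [hz_def, hi]
  have hzSc : ∀ i ∈ Sᶜ, z i = y i := by
    intro i hi; rw [Finset.mem_compl] at hi; simp [hz_def, hi]
  have hzpos : ∀ i, 0 < z i := by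
    intro i
    by_cases h : i ∈ S
    · rw [hzS i h]; norm_num
    · rw [hzSc i (Finset.mem_compl.mpr h)]
      exact hypos i (Finset.mem_compl.mpr h)
  have hzfeas : Feasible p m z := by
    constructor
    · have h1 : (∑ i ∈ S, p i * z i) = ∑ i ∈ S, p i := by
        apply Finset.sum_congr rfl; intro i hi; rw [hzS i hi, mul_one]
      have h2 : (∑ i ∈ Sᶜ, p i * z i) = ∑ i ∈ Sᶜ, p i * y i := by
        apply Finset.sum_congr rfl; intro i hi; rw [hzSc i hi]
      have := Finset.sum_add_sum_compl S (fun i => p i * z i)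
      rw [h1, h2, hysum] at this
      rw [← this]; ring_nf; exact le_refl m
    · intro i
      by_cases h : i ∈ S
      · rw [hzS i h]; norm_num
      · rw [hzSc i (Finset.mem_compl.mpr h)]
        exact hybd i (Finset.mem_compl.mpr h)
  have hle := hopt z hzfeas
  -- llObj α z = llObjOn Sᶜ α y
  have hz_obj : llObj α z = llObjOn Sᶜ α y := by
    rw [llObj, llObjOn, if_pos hzpos, if_pos hypos]
    congr 1
    have h1 : (∑ i ∈ S, α i * Real.log (z i)) = 0 := by
      apply Finset.sum_eq_zero
      intro i hi; rw [hzS i hi, Real.log_one, mul_zero]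
    have h2 : (∑ i ∈ Sᶜ, α i * Real.log (z i)) = ∑ i ∈ Sᶜ, α i * Real.log (y i) := by
      apply Finset.sum_congr rfl; intro i hi; rw [hzSc i hi]
    have := Finset.sum_add_sum_compl S (fun i => α i * Real.log (z i))
    rw [h1, h2, zero_add] at this
    exact_mod_cast this.symm
  -- llObj α xstar = llObjOn Sᶜ α xstar
  have hx_obj : llObj α xstar = llObjOn Sᶜ α xstar := by
    rw [llObj, llObjOn, if_pos hpos, if_pos (fun j _ => hpos j)]
    congr 1
    have h1 : (∑ i ∈ S, α i * Real.log (xstar i)) = 0 := by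
      apply Finset.sum_eq_zero
      intro i hi; rw [honeS i hi, Real.log_one, mul_zero]
    have := Finset.sum_add_sum_compl S (fun i => α i * Real.log (xstar i))
    rw [h1, zero_add] at this
    exact_mod_cast this.symm
  rw [hz_obj, hx_obj] at hle
  exact hle
end
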